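/- The restriction of the R-platform map Ξ_R to gapless R-tuples is a bijection from the set of gapless R-tuples onto the set of R-ceiling flags, with inverse given by the R-core map Δ_R. -/
import Mathlib


open Finset

/-- End of the carrel containing `i`: the least `q ≥ i` with `q ∈ R` or `q = n`. -/
noncomputable def carrelEnd (R : Finset ℕ) (n i : ℕ) : ℕ := sInf {q | i ≤ q ∧ (q ∈ R ∨ q = n)}

/-- `x` is a critical index of the upper `R`-tuple `β`:
`β x - x < β j - j` for every `j` with `x < j ≤ carrelEnd R n x`. -/
def IsCritical (R : Finset ℕ) (n : ℕ) (β : ℕ → ℕ) (x : ℕ) : Prop :=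
  1 ≤ x ∧ x ≤ n ∧ ∀ j, x < j → j ≤ carrelEnd R n x → β x + j < β j + x

/-- The least critical index `≥ i`: the right end of the block of `i`. -/
noncomputable def blockEnd (R : Finset ℕ) (n : ℕ) (β : ℕ → ℕ) (i : ℕ) : ℕ :=
  sInf {x | i ≤ x ∧ IsCritical R n β x}

/-- The `R`-core map `Δ_R`. -/
noncomputable def coreT (R : Finset ℕ) (n : ℕ) (β : ℕ → ℕ) (i : ℕ) : ℕ :=
  if 1 ≤ i ∧ i ≤ n then β (blockEnd R n β i) - (blockEnd R n β i - i) else 0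

/-- The `R`-platform map `Ξ_R`. -/
noncomputable def platformT (R : Finset ℕ) (n : ℕ) (β : ℕ → ℕ) (i : ℕ) : ℕ :=
  if 1 ≤ i ∧ i ≤ n then β (blockEnd R n β i) else 0

/-- An upper tuple: entries in `[n]` with `β i ≥ i` on `[1, n]`. -/
def UpperTuple (n : ℕ) (β : ℕ → ℕ) : Prop := ∀ i, 1 ≤ i → i ≤ n → i ≤ β i ∧ β i ≤ n

/-- `R ⊆ [n-1]`. -/
def ValidR (n : ℕ) (R : Finset ℕ) : Prop := ∀ q ∈ R, 1 ≤ q ∧ q < n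

/-- An `R`-increasing tuple: strictly increasing within each carrel. -/
def RIncreasing (n : ℕ) (R : Finset ℕ) (β : ℕ → ℕ) : Prop :=
  ∀ i, 1 ≤ i → i < n → i ∉ R → β i < β (i + 1)

/-- The critical list of `β` is a flag critical list: the rightmost critical entry `β q`
of each non-final carrel is at most the leftmost critical entry of the next carrel. -/
def FlagCriticalList (R : Finset ℕ) (n : ℕ) (β : ℕ → ℕ) : Prop :=
  ∀ q ∈ R, β q ≤ β (blockEnd R n β (q + 1))

/-- Normalization: entries outside `[1, n]` vanish. -/
def NormalizedT (n : ℕ) (β : ℕ → ℕ) : Prop := ∀ i, i = 0 ∨ n < i → β i = 0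

/-- An `R`-ceiling flag: an upper flag that is a concatenation of plateaus whose
rightmost pairs are exactly its `R`-critical pairs. -/
def IsCeilingFlag (R : Finset ℕ) (n : ℕ) (ξ : ℕ → ℕ) : Prop :=
  UpperTuple n ξ ∧ (∀ i, 1 ≤ i → i < n → ξ i ≤ ξ (i + 1)) ∧
  (∀ i, 1 ≤ i → i ≤ n → (IsCritical R n ξ i ↔ (i = n ∨ i ∈ R ∨ ξ i ≠ ξ (i + 1))))

/-- `lam` (on indices `1, ..., n`) is a partition. -/
def IsPartition (n : ℕ) (lam : ℕ → ℕ) : Prop := ∀ i, 1 ≤ i → i < n → lam (i + 1) ≤ lam i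

/-- `R_λ`: the set of column lengths of the shape `λ` that are less than `n`. -/
def Rlam (n : ℕ) (lam : ℕ → ℕ) : Finset ℕ :=
  ((Finset.Icc 1 (lam 1)).image fun j => ((Finset.Icc 1 n).filter fun i => j ≤ lam i).card).filter
    (· < n)

/-- A semistandard tableau of shape `lam` with values in `[n]`:
`T i j` is the value in row `i`, column `j`. -/
def IsSSYT (n : ℕ) (lam : ℕ → ℕ) (T : ℕ → ℕ → ℕ) : Prop :=
  (∀ i j, 1 ≤ i → i ≤ n → 1 ≤ j → j ≤ lam i → 1 ≤ T i j ∧ T i j ≤ n) ∧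
  (∀ i j, 1 ≤ i → i ≤ n → 1 ≤ j → j + 1 ≤ lam i → T i j ≤ T i (j + 1)) ∧
  (∀ i j, 1 ≤ i → i + 1 ≤ n → 1 ≤ j → j ≤ lam (i + 1) → T i j < T (i + 1) j)

/-- Every entry in row `i` is at most `β i`. -/
def RowBound (n : ℕ) (lam β : ℕ → ℕ) (T : ℕ → ℕ → ℕ) : Prop :=
  ∀ i j, 1 ≤ i → i ≤ n → 1 ≤ j → j ≤ lam i → T i j ≤ β i

/-- Normalization: values outside the shape vanish. -/
def NormalizedTab (n : ℕ) (lam : ℕ → ℕ) (T : ℕ → ℕ → ℕ) : Prop :=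
  ∀ i j, ¬(1 ≤ i ∧ i ≤ n ∧ 1 ≤ j ∧ j ≤ lam i) → T i j = 0

/-- Extended depth function of a lattice path with source depth `b`, sink depth `d`,
and `u` easterly steps of depths `t 1, ..., t u`. -/
def extDepth (b d u : ℕ) (t : ℕ → ℕ) (j : ℕ) : ℕ :=
  if j = 0 then b else if j ≤ u then t j else d

/-- `t` encodes a monotone lattice path from `(a, b)` to `(a + u, d)`:
the extended depths weakly increase. -/
def ValidPath (b d u : ℕ) (t : ℕ → ℕ) : Prop :=
  ∀ j, j ≤ u → extDepth b d u t j ≤ extDepth b d u t (j + 1)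

/-- The lattice point `p` lies on the path from `(a, b)` to `(a + u, d)` encoded by `t`. -/
def OnPath (a b d u : ℕ) (t : ℕ → ℕ) (p : ℕ × ℕ) : Prop :=
  ∃ j, j ≤ u ∧ p.1 = a + j ∧ extDepth b d u t j ≤ p.2 ∧ p.2 ≤ extDepth b d u t (j + 1)

/-- The terminal pair `(λ, β)` is nonpermutable: for every nontrivial permutation `π`
of `[n]`, there is no pairwise disjoint `n`-tuple of lattice paths in which the `m`-th
path goes from source `(n - m, m)` to sink `(λ (π m) + n - π m, β (π m))`. -/
def Nonpermutable (n : ℕ) (lam β : ℕ → ℕ) : Prop :=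
  ∀ π : ℕ → ℕ, Set.BijOn π (Set.Icc 1 n) (Set.Icc 1 n) →
    (∃ m, 1 ≤ m ∧ m ≤ n ∧ π m ≠ m) →
    ¬∃ (u : ℕ → ℕ) (L : ℕ → ℕ → ℕ),
      (∀ m, 1 ≤ m → m ≤ n → n - m + u m = lam (π m) + (n - π m) ∧
        ValidPath m (β (π m)) (u m) (L m)) ∧
      (∀ m m', 1 ≤ m → m ≤ n → 1 ≤ m' → m' ≤ n → m ≠ m' →
        ¬∃ p : ℕ × ℕ, OnPath (n - m) m (β (π m)) (u m) (L m) p ∧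
          OnPath (n - m') m' (β (π m')) (u m') (L m') p)

open Classical in
/-- The complete homogeneous symmetric polynomial `h_u(i, k; x)` of degree `u`
in the variables `X i, ..., X k`. -/
noncomputable def hpoly (u i k : ℕ) : MvPolynomial ℕ ℤ :=
  ∑ t ∈ Finset.univ.filter
      (fun t : Fin u → Fin (k + 1) => (∀ a, i ≤ (t a : ℕ)) ∧ Monotone fun a => (t a : ℕ)),
    ∏ a, MvPolynomial.X ((t a : ℕ))

/-- `h_d(i, k; x)` for an integer degree `d`, vanishing when `d < 0`. -/
noncomputable def hz (d : ℤ) (i k : ℕ) : MvPolynomial ℕ ℤ :=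
  if 0 ≤ d then hpoly d.toNat i k else 0

/-- The content weight monomial `x^{Θ(T)}` of a tableau of shape `lam`. -/
noncomputable def tabWeight (n : ℕ) (lam : ℕ → ℕ) (T : ℕ → ℕ → ℕ) : MvPolynomial ℕ ℤ :=
  ∏ i ∈ Finset.Icc 1 n, ∏ j ∈ Finset.Icc 1 (lam i), MvPolynomial.X (T i j)

/-- The row bound sum `s_λ(β; x)`: sum of `x^{Θ(T)}` over `T ∈ S_λ(β)`. -/
noncomputable def rowBoundSum (n : ℕ) (lam β : ℕ → ℕ) : MvPolynomial ℕ ℤ :=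
  ∑ᶠ T ∈ {T : ℕ → ℕ → ℕ |
      IsSSYT n lam T ∧ RowBound n lam β T ∧ NormalizedTab n lam T}, tabWeight n lam T

/-- The Gessel–Viennot matrix, with `(i, j)` entry `h_{λ_j - j + i}(i, β_j; x)`
(here `i, j` are `0`-based, so the `1`-based indices are `i+1, j+1`). -/
noncomputable def gvMatrix (n : ℕ) (lam β : ℕ → ℕ) :
    Matrix (Fin n) (Fin n) (MvPolynomial ℕ ℤ) :=
  Matrix.of fun i j =>
    hz ((lam (j.1 + 1) : ℤ) - (j.1 + 1) + (i.1 + 1)) (i.1 + 1) (β (j.1 + 1))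

/-- The number of monomials of `h_d(i, k; x)`:
`0` for negative degree, `1` for degree zero, else `C(k - i + d, d)` (0 if `k < i`). -/
def monCount (d : ℤ) (i k : ℕ) : ℕ :=
  if d < 0 then 0 else if d = 0 then 1
  else if k < i then 0 else (k - i + d.toNat).choose d.toNat
/-! ### Auxiliary lemmas for `stmt17` -/

section Stmt17Aux
set_option linter.unusedSectionVars false

private lemma chainEq (f : ℕ → ℕ) (c : ℕ) {a b : ℕ} (hab : a ≤ b)
    (h : ∀ m, a ≤ m → m < b → f (m + 1) = f m + c) : f b = f a + c * (b - a) := by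
  induction b, hab using Nat.le_induction with
  | base => simp
  | succ b hb ih =>
    rw [h b hb (by omega), ih (fun m hm hm' => h m hm (by omega))]
    have hba : b + 1 - a = (b - a) + 1 := by omega
    rw [hba]; ring

private lemma chainGe (f : ℕ → ℕ) (c : ℕ) {a b : ℕ} (hab : a ≤ b)
    (h : ∀ m, a ≤ m → m < b → f m + c ≤ f (m + 1)) : f a + c * (b - a) ≤ f b := by
  induction b, hab using Nat.le_induction with
  | base => simp
  | succ b hb ih =>
    have h1 := h b hb (by omega)
    have h2 := ih (fun m hm hm' => h m hm (by omega))
    have hba : b + 1 - a = (b - a) + 1 := by omega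
    rw [hba]; nlinarith

variable {R : Finset ℕ} {n : ℕ}

private lemma le_carrelEnd {i : ℕ} (hin : i ≤ n) : i ≤ carrelEnd R n i :=
  (Nat.sInf_mem (⟨n, hin, Or.inr rfl⟩ : {q | i ≤ q ∧ (q ∈ R ∨ q = n)}.Nonempty)).1

private lemma carrelEnd_mem {i : ℕ} (hin : i ≤ n) :
    carrelEnd R n i ∈ R ∨ carrelEnd R n i = n :=
  (Nat.sInf_mem (⟨n, hin, Or.inr rfl⟩ : {q | i ≤ q ∧ (q ∈ R ∨ q = n)}.Nonempty)).2

private lemma carrelEnd_le {i q : ℕ} (hiq : i ≤ q) (hq : q ∈ R ∨ q = n) :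
    carrelEnd R n i ≤ q := Nat.sInf_le ⟨hiq, hq⟩

private lemma carrelEnd_le_n {i : ℕ} (hin : i ≤ n) : carrelEnd R n i ≤ n :=
  carrelEnd_le hin (Or.inr rfl)

private lemma carrelEnd_congr {i j : ℕ} (hij : i ≤ j) (hj : j ≤ carrelEnd R n i)
    (hin : i ≤ n) : carrelEnd R n j = carrelEnd R n i := by
  have hjn : j ≤ n := le_trans hj (carrelEnd_le_n hin)
  refine le_antisymm (carrelEnd_le hj (carrelEnd_mem hin)) ?_
  exact carrelEnd_le (le_trans hij (le_carrelEnd hjn)) (carrelEnd_mem hjn)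

private lemma carrelEnd_gt {i : ℕ} (hin : i < n) (hiR : i ∉ R) : i < carrelEnd R n i := by
  rcases lt_or_eq_of_le (le_carrelEnd (le_of_lt hin) : i ≤ carrelEnd R n i) with h | h
  · exact h
  · exfalso
    rcases carrelEnd_mem (le_of_lt hin) with hc | hc
    · rw [← h] at hc; exact hiR hc
    · omega

private lemma isCritical_of_end {β : ℕ → ℕ} {x : ℕ} (hx1 : 1 ≤ x) (hxn : x ≤ n)
    (h : x ∈ R ∨ x = n) : IsCritical R n β x := by
  refine ⟨hx1, hxn, fun j hj1 hj2 => ?_⟩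
  exfalso
  have : carrelEnd R n x ≤ x := carrelEnd_le le_rfl h
  omega

private lemma blockSet_nonempty {β : ℕ → ℕ} {i : ℕ} (hi1 : 1 ≤ i) (hin : i ≤ n) :
    {x | i ≤ x ∧ IsCritical R n β x}.Nonempty :=
  ⟨carrelEnd R n i, le_carrelEnd hin,
    isCritical_of_end (le_trans hi1 (le_carrelEnd hin)) (carrelEnd_le_n hin)
      (carrelEnd_mem hin)⟩

private lemma le_blockEnd {β : ℕ → ℕ} {i : ℕ} (hi1 : 1 ≤ i) (hin : i ≤ n) :
    i ≤ blockEnd R n β i := (Nat.sInf_mem (blockSet_nonempty hi1 hin)).1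

private lemma blockEnd_critical {β : ℕ → ℕ} {i : ℕ} (hi1 : 1 ≤ i) (hin : i ≤ n) :
    IsCritical R n β (blockEnd R n β i) := (Nat.sInf_mem (blockSet_nonempty hi1 hin)).2

private lemma blockEnd_le {β : ℕ → ℕ} {i x : ℕ} (hix : i ≤ x) (hx : IsCritical R n β x) :
    blockEnd R n β i ≤ x := Nat.sInf_le ⟨hix, hx⟩

private lemma blockEnd_le_carrelEnd {β : ℕ → ℕ} {i : ℕ} (hi1 : 1 ≤ i) (hin : i ≤ n) :
    blockEnd R n β i ≤ carrelEnd R n i :=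
  blockEnd_le (le_carrelEnd hin)
    (isCritical_of_end (le_trans hi1 (le_carrelEnd hin)) (carrelEnd_le_n hin)
      (carrelEnd_mem hin))

private lemma blockEnd_le_n {β : ℕ → ℕ} {i : ℕ} (hi1 : 1 ≤ i) (hin : i ≤ n) :
    blockEnd R n β i ≤ n := le_trans (blockEnd_le_carrelEnd hi1 hin) (carrelEnd_le_n hin)

private lemma blockEnd_of_critical {β : ℕ → ℕ} {x : ℕ} (hx : IsCritical R n β x) :
    blockEnd R n β x = x :=
  le_antisymm (blockEnd_le le_rfl hx) (le_blockEnd hx.1 hx.2.1)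

private lemma blockEnd_congr {β : ℕ → ℕ} {i j : ℕ} (hi1 : 1 ≤ i) (hin : i ≤ n)
    (hij : i ≤ j) (hj : j ≤ blockEnd R n β i) : blockEnd R n β j = blockEnd R n β i := by
  refine le_antisymm (blockEnd_le hj (blockEnd_critical hi1 hin)) ?_
  have hj1 : 1 ≤ j := le_trans hi1 hij
  have hjn : j ≤ n := le_trans hj (blockEnd_le_n hi1 hin)
  exact blockEnd_le (le_trans hij (le_blockEnd hj1 hjn)) (blockEnd_critical hj1 hjn)

private lemma not_critical_of_lt_blockEnd {β : ℕ → ℕ} {i j : ℕ} (hij : i ≤ j)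
    (hj : j < blockEnd R n β i) : ¬ IsCritical R n β j :=
  fun h => absurd (blockEnd_le hij h) (by omega)

section Gapless

variable {γ : ℕ → ℕ} (hR : ValidR n R) (hU : UpperTuple n γ) (hInc : RIncreasing n R γ)

include hR hU hInc

private lemma step_eq {j : ℕ} (hj1 : 1 ≤ j) (hjn : j ≤ n)
    (hnc : ¬ IsCritical R n γ j) : γ (j + 1) = γ j + 1 := by
  have hnc' : ¬ ∀ k, j < k → k ≤ carrelEnd R n j → γ j + k < γ k + j := by
    intro h; exact hnc ⟨hj1, hjn, h⟩
  push_neg at hnc'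
  obtain ⟨k, hk1, hk2, hk3⟩ := hnc'
  have hce : carrelEnd R n j ≤ n := carrelEnd_le_n hjn
  have hstep : ∀ m, j ≤ m → m < k → γ m + 1 ≤ γ (m + 1) := by
    intro m hm hm'
    have hmn : m < n := by omega
    have hmR : m ∉ R := by
      intro hmem
      have := carrelEnd_le (R := R) (n := n) hm (Or.inl hmem)
      omega
    exact hInc m (le_trans hj1 hm) hmn hmR
  have h1 := chainGe γ 1 (le_of_lt hk1) hstep
  have h2 := chainGe γ 1 (by omega : j + 1 ≤ k) (fun m hm hm' => hstep m (by omega) hm')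
  have h3 := hstep j le_rfl hk1
  simp only [one_mul] at h1 h2
  omega

private lemma block_linear {i : ℕ} (hi1 : 1 ≤ i) (hin : i ≤ n) :
    γ (blockEnd R n γ i) = γ i + (blockEnd R n γ i - i) := by
  have hb := le_blockEnd (R := R) (β := γ) hi1 hin
  have hbn := blockEnd_le_n (R := R) (β := γ) hi1 hin
  have := chainEq γ 1 hb (fun m hm hm' =>
    step_eq hR hU hInc (le_trans hi1 hm) (by omega)
      (not_critical_of_lt_blockEnd hm hm'))
  simpa using this

private lemma platform_eq {i : ℕ} (hi1 : 1 ≤ i) (hin : i ≤ n) :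
    platformT R n γ i = γ (blockEnd R n γ i) := if_pos ⟨hi1, hin⟩

omit hR hU hInc in
private lemma platform_plateau {i j : ℕ} (hi1 : 1 ≤ i) (hin : i ≤ n) (hij : i ≤ j)
    (hj : j ≤ blockEnd R n γ i) : platformT R n γ j = platformT R n γ i := by
  have hjn : j ≤ n := le_trans hj (blockEnd_le_n hi1 hin)
  show (if 1 ≤ j ∧ j ≤ n then γ (blockEnd R n γ j) else 0)
      = (if 1 ≤ i ∧ i ≤ n then γ (blockEnd R n γ i) else 0)
  rw [if_pos ⟨le_trans hi1 hij, hjn⟩, if_pos ⟨hi1, hin⟩, blockEnd_congr hi1 hin hij hj]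

end Gapless

end Stmt17Aux

section Stmt17Main
set_option linter.unusedSectionVars false

variable {R : Finset ℕ} {n : ℕ}

private lemma core_eq {β : ℕ → ℕ} {i : ℕ} (hi1 : 1 ≤ i) (hin : i ≤ n) :
    coreT R n β i = β (blockEnd R n β i) - (blockEnd R n β i - i) := if_pos ⟨hi1, hin⟩

section GaplessMain

variable {γ : ℕ → ℕ} (hR : ValidR n R) (hU : UpperTuple n γ) (hInc : RIncreasing n R γ)

include hR hU hInc

private lemma lt_blockEnd_of_not_crit {x : ℕ} {β : ℕ → ℕ} (hx1 : 1 ≤ x) (hxn : x ≤ n)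
    (hnc : ¬ IsCritical R n β x) : x < blockEnd R n β x := by
  rcases lt_or_eq_of_le (le_blockEnd (R := R) (β := β) hx1 hxn) with h | h
  · exact h
  · exfalso
    have hc := blockEnd_critical (R := R) (β := β) hx1 hxn
    rw [← h] at hc
    exact hnc hc

private lemma critA {x : ℕ} (hx1 : 1 ≤ x) (hxn : x ≤ n) :
    (IsCritical R n (platformT R n γ) x ↔ IsCritical R n γ x) ∧
    (IsCritical R n γ x ↔ (x = n ∨ x ∈ R ∨
      platformT R n γ x ≠ platformT R n γ (x + 1))) := by
  by_cases hend : x ∈ R ∨ x = n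
  · refine ⟨⟨fun _ => isCritical_of_end hx1 hxn hend,
      fun _ => isCritical_of_end hx1 hxn hend⟩,
      ⟨fun _ => ?_, fun _ => isCritical_of_end hx1 hxn hend⟩⟩
    rcases hend with h | h
    · exact Or.inr (Or.inl h)
    · exact Or.inl h
  push_neg at hend
  obtain ⟨hxR, hxn'⟩ := hend
  have hxn2 : x < n := lt_of_le_of_ne hxn hxn'
  have hce : x < carrelEnd R n x := carrelEnd_gt hxn2 hxR
  have hcen : carrelEnd R n x ≤ n := carrelEnd_le_n hxn
  have h1 : IsCritical R n γ x → platformT R n γ x < platformT R n γ (x + 1) := by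
    intro hc
    have hbx : blockEnd R n γ x = x := blockEnd_of_critical hc
    have hx1n : x + 1 ≤ n := hxn2
    have hy1 : x + 1 ≤ blockEnd R n γ (x + 1) := le_blockEnd (by omega) hx1n
    have hyce : blockEnd R n γ (x + 1) ≤ carrelEnd R n x := by
      have h := blockEnd_le_carrelEnd (R := R) (β := γ) (i := x + 1) (by omega) hx1n
      rwa [carrelEnd_congr (by omega) hce hxn] at h
    have hcr := hc.2.2 (blockEnd R n γ (x + 1)) (by omega) hyce
    rw [platform_eq hR hU hInc hx1 hxn, platform_eq hR hU hInc (by omega) hx1n, hbx]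
    omega
  have h2 : platformT R n γ x ≠ platformT R n γ (x + 1) → IsCritical R n γ x := by
    intro hne
    by_contra hnc
    have hbx : x < blockEnd R n γ x := lt_blockEnd_of_not_crit hR hU hInc hx1 hxn hnc
    exact hne (platform_plateau hx1 hxn (by omega) hbx).symm
  have h3 : IsCritical R n γ x → IsCritical R n (platformT R n γ) x := by
    intro hc
    have hbx : blockEnd R n γ x = x := blockEnd_of_critical hc
    refine ⟨hx1, hxn, fun j hj1 hj2 => ?_⟩
    have hj2n : j ≤ n := le_trans hj2 hcen
    have hbj : j ≤ blockEnd R n γ j := le_blockEnd (by omega) hj2n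
    have hbjce : blockEnd R n γ j ≤ carrelEnd R n x := by
      have h := blockEnd_le_carrelEnd (R := R) (β := γ) (i := j) (by omega) hj2n
      rwa [carrelEnd_congr (le_of_lt hj1) hj2 hxn] at h
    have hcr := hc.2.2 (blockEnd R n γ j) (by omega) hbjce
    rw [platform_eq hR hU hInc hx1 hxn, platform_eq hR hU hInc (by omega) hj2n, hbx]
    omega
  have h4 : IsCritical R n (platformT R n γ) x → IsCritical R n γ x := by
    intro hc
    have hcr := hc.2.2 (x + 1) (by omega) hce
    exact h2 (by omega)
  refine ⟨⟨h4, h3⟩, ⟨fun hc => Or.inr (Or.inr (Nat.ne_of_lt (h1 hc))), fun h => ?_⟩⟩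
  rcases h with h | h | h
  · exact absurd h hxn'
  · exact absurd h hxR
  · exact h2 h

private lemma platform_mono (hFl : FlagCriticalList R n γ) {i : ℕ} (hi1 : 1 ≤ i)
    (hin : i < n) : platformT R n γ i ≤ platformT R n γ (i + 1) := by
  by_cases hc : IsCritical R n γ i
  · have hbx : blockEnd R n γ i = i := blockEnd_of_critical hc
    by_cases hiR : i ∈ R
    · have hfl := hFl i hiR
      rw [platform_eq hR hU hInc hi1 (le_of_lt hin),
        platform_eq hR hU hInc (by omega) hin, hbx]
      exact hfl
    · have h := (critA hR hU hInc hi1 (le_of_lt hin)).2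
      have hbe : i < blockEnd R n γ (i + 1) := by
        have := le_blockEnd (R := R) (β := γ) (i := i + 1) (by omega) hin
        omega
      have hce : i < carrelEnd R n i := carrelEnd_gt hin hiR
      have hyce : blockEnd R n γ (i + 1) ≤ carrelEnd R n i := by
        have h' := blockEnd_le_carrelEnd (R := R) (β := γ) (i := i + 1) (by omega) hin
        rwa [carrelEnd_congr (by omega) hce (le_of_lt hin)] at h'
      have hcr := hc.2.2 (blockEnd R n γ (i + 1)) hbe hyce
      rw [platform_eq hR hU hInc hi1 (le_of_lt hin),
        platform_eq hR hU hInc (by omega) (by omega : i + 1 ≤ n), hbx]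
      omega
  · have hbx : i < blockEnd R n γ i := lt_blockEnd_of_not_crit hR hU hInc hi1 (le_of_lt hin) hc
    exact le_of_eq (platform_plateau hi1 (le_of_lt hin) (by omega) hbx).symm

private lemma mapsA (hFl : FlagCriticalList R n γ) :
    IsCeilingFlag R n (platformT R n γ) ∧ NormalizedT n (platformT R n γ) := by
  refine ⟨⟨?_, ?_, ?_⟩, ?_⟩
  · intro i hi1 hin
    rw [platform_eq hR hU hInc hi1 hin]
    have hb1 : i ≤ blockEnd R n γ i := le_blockEnd hi1 hin
    have hbn : blockEnd R n γ i ≤ n := blockEnd_le_n hi1 hin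
    have hu := hU (blockEnd R n γ i) (by omega) hbn
    omega
  · intro i hi1 hin
    exact platform_mono hR hU hInc hFl hi1 hin
  · intro i hi1 hin
    exact ((critA hR hU hInc hi1 hin).1).trans ((critA hR hU hInc hi1 hin).2)
  · intro i hi
    exact if_neg (by omega)

private lemma blockEnd_platform (i : ℕ) :
    blockEnd R n (platformT R n γ) i = blockEnd R n γ i := by
  unfold blockEnd
  congr 1
  ext x
  simp only [Set.mem_setOf_eq]
  constructor
  · rintro ⟨hx, hc⟩
    exact ⟨hx, (critA hR hU hInc hc.1 hc.2.1).1.mp hc⟩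
  · rintro ⟨hx, hc⟩
    exact ⟨hx, (critA hR hU hInc hc.1 hc.2.1).1.mpr hc⟩

private lemma leftInv (hN : NormalizedT n γ) : coreT R n (platformT R n γ) = γ := by
  funext i
  by_cases hi : 1 ≤ i ∧ i ≤ n
  · obtain ⟨hi1, hin⟩ := hi
    rw [core_eq hi1 hin, blockEnd_platform hR hU hInc i]
    have hb1 : i ≤ blockEnd R n γ i := le_blockEnd hi1 hin
    have hbn : blockEnd R n γ i ≤ n := blockEnd_le_n hi1 hin
    have hcb : IsCritical R n γ (blockEnd R n γ i) := blockEnd_critical hi1 hin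
    have hpe : platformT R n γ (blockEnd R n γ i) = γ (blockEnd R n γ i) := by
      rw [platform_eq hR hU hInc (by omega) hbn, blockEnd_of_critical hcb]
    rw [hpe]
    have hlin := block_linear hR hU hInc hi1 hin
    omega
  · have h1 : coreT R n (platformT R n γ) i = 0 := if_neg hi
    rw [h1, hN i (by omega)]

end GaplessMain

section CeilingMain

variable {ξ : ℕ → ℕ} (hCF : IsCeilingFlag R n ξ)

include hCF

private lemma xi_plateau {i j : ℕ} (hi1 : 1 ≤ i) (hin : i ≤ n) (hij : i ≤ j)
    (hj : j ≤ blockEnd R n ξ i) : ξ j = ξ i := by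
  have hbn : blockEnd R n ξ i ≤ n := blockEnd_le_n hi1 hin
  have h := chainEq ξ 0 hij (fun m hm hm' => ?_)
  · simpa using h
  · have hm1 : 1 ≤ m := le_trans hi1 hm
    have hmn : m ≤ n := by omega
    have hnc : ¬ IsCritical R n ξ m := not_critical_of_lt_blockEnd hm (by omega)
    have hr : ¬(m = n ∨ m ∈ R ∨ ξ m ≠ ξ (m + 1)) := fun h' =>
      hnc ((hCF.2.2 m hm1 hmn).mpr h')
    push_neg at hr
    omega

private lemma xi_mono {a c : ℕ} (ha1 : 1 ≤ a) (hac : a ≤ c) (hcn : c ≤ n) :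
    ξ a ≤ ξ c := by
  have h := chainGe ξ 0 hac (fun m hm hm' => by
    have := hCF.2.1 m (le_trans ha1 hm) (by omega)
    omega)
  simpa using h

private lemma coreC_upper : UpperTuple n (coreT R n ξ) := by
  intro i hi1 hin
  have hb1 : i ≤ blockEnd R n ξ i := le_blockEnd hi1 hin
  have hbn : blockEnd R n ξ i ≤ n := blockEnd_le_n hi1 hin
  have hu := hCF.1 (blockEnd R n ξ i) (by omega) hbn
  rw [core_eq hi1 hin]
  omega

private lemma coreC_inc : RIncreasing n R (coreT R n ξ) := by
  intro i hi1 hin hiR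
  have hi1n : i + 1 ≤ n := hin
  rw [core_eq hi1 (le_of_lt hin), core_eq (by omega) hi1n]
  have hb1 : i ≤ blockEnd R n ξ i := le_blockEnd hi1 (le_of_lt hin)
  by_cases hbx : i < blockEnd R n ξ i
  · rw [blockEnd_congr hi1 (le_of_lt hin) (by omega) hbx]
    have hu := hCF.1 (blockEnd R n ξ i) (by omega) (blockEnd_le_n hi1 (le_of_lt hin))
    omega
  · have hbe : blockEnd R n ξ i = i := by omega
    have hc : IsCritical R n ξ i := by
      have h := blockEnd_critical (R := R) (β := ξ) hi1 (le_of_lt hin)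
      rwa [hbe] at h
    have hy1 : i + 1 ≤ blockEnd R n ξ (i + 1) := le_blockEnd (by omega) hi1n
    have hyn : blockEnd R n ξ (i + 1) ≤ n := blockEnd_le_n (by omega) hi1n
    have hce : i < carrelEnd R n i := carrelEnd_gt hin hiR
    have hyce : blockEnd R n ξ (i + 1) ≤ carrelEnd R n i := by
      have h := blockEnd_le_carrelEnd (R := R) (β := ξ) (i := i + 1) (by omega) hi1n
      rwa [carrelEnd_congr (by omega) hce (le_of_lt hin)] at h
    have hcr := hc.2.2 (blockEnd R n ξ (i + 1)) (by omega) hyce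
    have hu := hCF.1 (blockEnd R n ξ (i + 1)) (by omega) hyn
    rw [hbe]
    omega

private lemma coreC_crit {x : ℕ} (hx1 : 1 ≤ x) (hxn : x ≤ n) :
    IsCritical R n (coreT R n ξ) x ↔ IsCritical R n ξ x := by
  constructor
  · intro hc
    by_contra hnξ
    have hr : ¬(x = n ∨ x ∈ R ∨ ξ x ≠ ξ (x + 1)) := fun h =>
      hnξ ((hCF.2.2 x hx1 hxn).mpr h)
    push_neg at hr
    obtain ⟨hxn', hxR, hxe⟩ := hr
    have hb1 : x ≤ blockEnd R n ξ x := le_blockEnd hx1 hxn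
    have hbx : x < blockEnd R n ξ x := by
      rcases lt_or_eq_of_le hb1 with h | h
      · exact h
      · exfalso
        have hcb := blockEnd_critical (R := R) (β := ξ) hx1 hxn
        rw [← h] at hcb
        exact hnξ hcb
    have hxn2 : x < n := lt_of_le_of_ne hxn hxn'
    have hbc : blockEnd R n ξ (x + 1) = blockEnd R n ξ x :=
      blockEnd_congr hx1 hxn (by omega) hbx
    have hcr := hc.2.2 (x + 1) (by omega) (carrelEnd_gt hxn2 hxR)
    rw [core_eq hx1 hxn, core_eq (by omega) hxn2, hbc] at hcr
    have hu := hCF.1 (blockEnd R n ξ x) (by omega) (blockEnd_le_n hx1 hxn)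
    omega
  · intro hc
    have hbe : blockEnd R n ξ x = x := blockEnd_of_critical hc
    refine ⟨hx1, hxn, fun j hj1 hj2 => ?_⟩
    have hjn : j ≤ n := le_trans hj2 (carrelEnd_le_n hxn)
    have hbj1 : j ≤ blockEnd R n ξ j := le_blockEnd (by omega) hjn
    have hbjce : blockEnd R n ξ j ≤ carrelEnd R n x := by
      have h := blockEnd_le_carrelEnd (R := R) (β := ξ) (i := j) (by omega) hjn
      rwa [carrelEnd_congr (le_of_lt hj1) hj2 hxn] at h
    have hcr := hc.2.2 (blockEnd R n ξ j) (by omega) hbjce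
    have hu := hCF.1 (blockEnd R n ξ j) (by omega) (blockEnd_le_n (by omega) hjn)
    rw [core_eq hx1 hxn, core_eq (by omega : 1 ≤ j) hjn, hbe]
    omega

private lemma coreC_blockEnd (i : ℕ) :
    blockEnd R n (coreT R n ξ) i = blockEnd R n ξ i := by
  unfold blockEnd
  congr 1
  ext x
  simp only [Set.mem_setOf_eq]
  constructor
  · rintro ⟨hx, hc⟩
    exact ⟨hx, (coreC_crit hCF hc.1 hc.2.1).mp hc⟩
  · rintro ⟨hx, hc⟩
    exact ⟨hx, (coreC_crit hCF hc.1 hc.2.1).mpr hc⟩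

private lemma coreC_flag (hR : ValidR n R) : FlagCriticalList R n (coreT R n ξ) := by
  intro q hq
  obtain ⟨hq1, hqn⟩ := hR q hq
  rw [coreC_blockEnd hCF]
  have hx1 : q + 1 ≤ blockEnd R n ξ (q + 1) := le_blockEnd (by omega) hqn
  have hxn : blockEnd R n ξ (q + 1) ≤ n := blockEnd_le_n (by omega) hqn
  have hcq : IsCritical R n ξ q :=
    (hCF.2.2 q hq1 (le_of_lt hqn)).mpr (Or.inr (Or.inl hq))
  have hbq : blockEnd R n ξ q = q := blockEnd_of_critical hcq
  have hcx : IsCritical R n ξ (blockEnd R n ξ (q + 1)) := blockEnd_critical (by omega) hqn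
  have hbx : blockEnd R n ξ (blockEnd R n ξ (q + 1)) = blockEnd R n ξ (q + 1) :=
    blockEnd_of_critical hcx
  rw [core_eq hq1 (le_of_lt hqn), core_eq (by omega : 1 ≤ blockEnd R n ξ (q + 1)) hxn,
    hbq, hbx]
  have hmono : ξ q ≤ ξ (blockEnd R n ξ (q + 1)) := xi_mono hCF hq1 (by omega) hxn
  omega

private lemma rightInv (hN : NormalizedT n ξ) : platformT R n (coreT R n ξ) = ξ := by
  funext i
  by_cases hi : 1 ≤ i ∧ i ≤ n
  · obtain ⟨hi1, hin⟩ := hi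
    have hpe : platformT R n (coreT R n ξ) i =
        coreT R n ξ (blockEnd R n (coreT R n ξ) i) := if_pos ⟨hi1, hin⟩
    rw [hpe, coreC_blockEnd hCF i]
    have hb1 : i ≤ blockEnd R n ξ i := le_blockEnd hi1 hin
    have hbn : blockEnd R n ξ i ≤ n := blockEnd_le_n hi1 hin
    have hcb : IsCritical R n ξ (blockEnd R n ξ i) := blockEnd_critical hi1 hin
    rw [core_eq (by omega : 1 ≤ blockEnd R n ξ i) hbn, blockEnd_of_critical hcb]
    have hpl : ξ (blockEnd R n ξ i) = ξ i := xi_plateau hCF hi1 hin hb1 le_rfl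
    omega
  · rw [hN i (by omega)]
    exact if_neg hi

end CeilingMain

end Stmt17Main

/-- The restriction of the `R`-platform map `Ξ_R` to gapless `R`-tuples is a bijection
onto the set of `R`-ceiling flags, with inverse the `R`-core map `Δ_R`. -/
theorem stmt17 (n : ℕ) (R : Finset ℕ) (hR : ValidR n R) :
    Set.BijOn (platformT R n)
      {γ | UpperTuple n γ ∧ RIncreasing n R γ ∧ FlagCriticalList R n γ ∧ NormalizedT n γ}
      {ξ | IsCeilingFlag R n ξ ∧ NormalizedT n ξ} ∧
    Set.InvOn (coreT R n) (platformT R n)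
      {γ | UpperTuple n γ ∧ RIncreasing n R γ ∧ FlagCriticalList R n γ ∧ NormalizedT n γ}
      {ξ | IsCeilingFlag R n ξ ∧ NormalizedT n ξ} := by
  have hMaps1 : Set.MapsTo (platformT R n)
      {γ | UpperTuple n γ ∧ RIncreasing n R γ ∧ FlagCriticalList R n γ ∧ NormalizedT n γ}
      {ξ | IsCeilingFlag R n ξ ∧ NormalizedT n ξ} := by
    rintro γ ⟨hU, hInc, hFl, hN⟩
    exact mapsA hR hU hInc hFl
  have hMaps2 : Set.MapsTo (coreT R n)
      {ξ | IsCeilingFlag R n ξ ∧ NormalizedT n ξ}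
      {γ | UpperTuple n γ ∧ RIncreasing n R γ ∧ FlagCriticalList R n γ ∧ NormalizedT n γ} := by
    rintro ξ ⟨hCF, hN⟩
    exact ⟨coreC_upper hCF, coreC_inc hCF, coreC_flag hCF hR, fun i hi => if_neg (by omega)⟩
  have hInv : Set.InvOn (coreT R n) (platformT R n)
      {γ | UpperTuple n γ ∧ RIncreasing n R γ ∧ FlagCriticalList R n γ ∧ NormalizedT n γ}
      {ξ | IsCeilingFlag R n ξ ∧ NormalizedT n ξ} := by
    constructor
    · rintro γ ⟨hU, hInc, hFl, hN⟩
      exact leftInv hR hU hInc hN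
    · rintro ξ ⟨hCF, hN⟩
      exact rightInv hCF hN
  exact ⟨hInv.bijOn hMaps1 hMaps2, hInv⟩
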